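/- For every real number p ≥ 3 there exists a constant C > 0 such that for all real numbers a and b, ||b|^{p-2} b - |a|^{p-2} a - (p-1)|a|^{p-2}(b-a)| ≤ C (|b|^{p-3} + |a|^{p-3}) |b - a|^2. -/

import Mathlib

/-!
With `q = p - 2 ≥ 1`, the function `f x = |x| ^ q * x` has derivative `f' x = (q + 1) * |x| ^ q`,
and on `[-M, M]`, `M = max |a| |b|`, the mean value inequality for `t ↦ t ^ q` makes `f'`
Lipschitz with constant `(q + 1) * q * M ^ (q - 1)`. A Lipschitz derivative bounds the first-order
Taylor remainder of `f` on the segment between `a` and `b` by that constant times `|b - a| ^ 2`,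
and `M ^ (p - 3) ≤ |a| ^ (p - 3) + |b| ^ (p - 3)`.
-/

open Set Filter Topology

lemma hasDerivAt_abs_rpow_mul_self {q : ℝ} (hq : 0 < q) (x : ℝ) :
    HasDerivAt (fun y : ℝ => |y| ^ q * y) ((q + 1) * |x| ^ q) x := by
  rcases eq_or_ne x 0 with rfl | hx
  · -- the slope at `0` is `|y| ^ q`, which tends to `0`
    rw [abs_zero, Real.zero_rpow hq.ne', mul_zero, hasDerivAt_iff_tendsto_slope]
    have hlim : Tendsto (fun y : ℝ => |y| ^ q) (𝓝[≠] 0) (𝓝 0) := by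
      have := (continuous_abs.rpow_const fun _ => Or.inr hq.le).tendsto (0 : ℝ)
      simpa [Real.zero_rpow hq.ne'] using this.mono_left nhdsWithin_le_nhds
    refine hlim.congr' ?_
    filter_upwards [self_mem_nhdsWithin] with y (hy : y ≠ 0)
    simp [slope_def_field, Real.zero_rpow hq.ne', hy]
  · have hpow := (Real.hasDerivAt_rpow_const (p := q) (Or.inl (abs_ne_zero.2 hx))).comp x
      (hasDerivAt_abs hx)
    refine (hpow.mul (hasDerivAt_id' x)).congr_deriv ?_
    rw [Function.comp_apply, mul_assoc _ _ x, sign_mul_self, Real.rpow_sub_one (abs_ne_zero.2 hx)]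
    field_simp

lemma abs_le_max_abs_abs_of_mem_uIcc {a b x : ℝ} (hx : x ∈ uIcc a b) : |x| ≤ max |a| |b| := by
  rcases mem_uIcc.1 hx with ⟨hax, hxb⟩ | ⟨hbx, hxa⟩
  · exact abs_le_max_abs_abs hax hxb
  · exact max_comm |a| |b| ▸ abs_le_max_abs_abs hbx hxa

lemma rpow_max_le_rpow_add_rpow {x y : ℝ} (hx : 0 ≤ x) (hy : 0 ≤ y) (r : ℝ) :
    max x y ^ r ≤ x ^ r + y ^ r := by
  have := Real.rpow_nonneg hx r
  have := Real.rpow_nonneg hy r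
  rcases max_choice x y with h | h <;> rw [h] <;> linarith

lemma abs_rpow_sub_rpow_le {q M x y : ℝ} (hq : 1 ≤ q) (hx : x ∈ Icc 0 M) (hy : y ∈ Icc 0 M) :
    |x ^ q - y ^ q| ≤ q * M ^ (q - 1) * |x - y| := by
  refine (convex_Icc 0 M).norm_image_sub_le_of_norm_hasDerivWithin_le
    (fun t _ => (Real.hasDerivAt_rpow_const (Or.inr hq)).hasDerivWithinAt) (fun t ht => ?_) hy hx
  rw [Real.norm_eq_abs, abs_of_nonneg (by have := ht.1; positivity)]
  exact mul_le_mul_of_nonneg_left (Real.rpow_le_rpow ht.1 ht.2 (by linarith)) (by linarith)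

lemma abs_abs_rpow_sub_abs_rpow_le {q M x y : ℝ} (hq : 1 ≤ q) (hx : |x| ≤ M) (hy : |y| ≤ M) :
    |(|x| ^ q - |y| ^ q)| ≤ q * M ^ (q - 1) * |x - y| :=
  (abs_rpow_sub_rpow_le hq ⟨abs_nonneg x, hx⟩ ⟨abs_nonneg y, hy⟩).trans <|
    mul_le_mul_of_nonneg_left (abs_abs_sub_abs_le_abs_sub x y)
      (mul_nonneg (by linarith) (Real.rpow_nonneg ((abs_nonneg x).trans hx) _))

lemma abs_sub_sub_deriv_mul_sub_le {f f' : ℝ → ℝ} {a b K : ℝ} (hK : 0 ≤ K)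
    (hf : ∀ x ∈ uIcc a b, HasDerivAt f (f' x) x)
    (hf' : ∀ x ∈ uIcc a b, |f' x - f' a| ≤ K * |x - a|) :
    |f b - f a - f' a * (b - a)| ≤ K * |b - a| ^ 2 := by
  have hg : ∀ x ∈ uIcc a b,
      HasDerivWithinAt (fun y => f y - f' a * y) (f' x - f' a) (uIcc a b) x := fun x hx =>
    ((hf x hx).sub ((hasDerivAt_id x).const_mul (f' a))).hasDerivWithinAt.congr_deriv (by simp)
  have bound : ∀ x ∈ uIcc a b, ‖f' x - f' a‖ ≤ K * |b - a| := fun x hx =>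
    (hf' x hx).trans (mul_le_mul_of_nonneg_left (abs_sub_left_of_mem_uIcc hx) hK)
  have := (convex_uIcc a b).norm_image_sub_le_of_norm_hasDerivWithin_le hg bound
    left_mem_uIcc right_mem_uIcc
  rw [Real.norm_eq_abs, Real.norm_eq_abs, mul_assoc, ← sq] at this
  convert this using 2
  ring

/-- For every real `p ≥ 3` there is `C > 0` such that for all `a b : ℝ`,
`||b|^{p-2} b - |a|^{p-2} a - (p-1)|a|^{p-2}(b-a)| ≤ C (|b|^{p-3} + |a|^{p-3}) |b - a|²`. -/
theorem stmt1 (p : ℝ) (hp : 3 ≤ p) :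
    ∃ C > (0:ℝ), ∀ a b : ℝ,
      abs (|b| ^ (p - 2) * b - |a| ^ (p - 2) * a - (p - 1) * |a| ^ (p - 2) * (b - a)) ≤
        C * (|b| ^ (p - 3) + |a| ^ (p - 3)) * |b - a| ^ 2 := by
  have hp2 : 0 < p - 2 := by linarith
  have hp1 : 0 < p - 1 := by linarith
  refine ⟨(p - 1) * (p - 2), by positivity, fun a b => ?_⟩
  have hderiv (x : ℝ) : HasDerivAt (fun y => |y| ^ (p - 2) * y) ((p - 1) * |x| ^ (p - 2)) x := by
    simpa only [show p - 2 + 1 = p - 1 by ring] using hasDerivAt_abs_rpow_mul_self hp2 x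
  have hlip (x : ℝ) (hx : x ∈ uIcc a b) :
      |(p - 1) * |x| ^ (p - 2) - (p - 1) * |a| ^ (p - 2)| ≤
        (p - 1) * (p - 2) * max |a| |b| ^ (p - 3) * |x - a| := by
    rw [← mul_sub, abs_mul, abs_of_pos hp1, mul_assoc (p - 1), mul_assoc (p - 1)]
    refine mul_le_mul_of_nonneg_left ?_ hp1.le
    simpa only [show p - 2 - 1 = p - 3 by ring] using
      abs_abs_rpow_sub_abs_rpow_le (q := p - 2) (by linarith) (abs_le_max_abs_abs_of_mem_uIcc hx)
        (le_max_left _ _)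
  calc _ ≤ (p - 1) * (p - 2) * max |a| |b| ^ (p - 3) * |b - a| ^ 2 := by
        simpa only [mul_assoc] using
          abs_sub_sub_deriv_mul_sub_le (by positivity) (fun x _ => hderiv x) hlip
    _ ≤ _ := by
        rw [add_comm]
        gcongr
        exact rpow_max_le_rpow_add_rpow (abs_nonneg a) (abs_nonneg b) _
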